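/- arXiv:2104.13616 — 5 statements merged into one kernel-verified Lean document; each statement's English description precedes it below -/
import Mathlib

section
/- Let N and L be positive integers with N < L, and let T be a real N×(L−N) matrix. Suppose Tᵀ = V·λ·Oᵀ is a singular value decomposition: O is an N×N real orthogonal matrix, V is an (L−N)×(L−N) real orthogonal matrix, and λ is a real (L−N)×N matrix with λ_{p,q} = 0 whenever p ≠ q. Then, with U = O ⊕ V (the L×L block-diagonal matrix with blocks O and V), one has Uᵀ·γ^Δ_ζ·U = (−λᵀλ) ⊕ (λλᵀ); i.e., the natural difference orbitals obtained from the singular vectors of the transition density matrix diagonalize the difference density matrix, so the nonzero natural difference and transition orbital components are identical. -/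
open Matrix

/-- Given an SVD `Tᵀ = V·λ·Oᵀ` of the ζ-type transition coefficient
matrix, the block-diagonal orthogonal matrix `U = O ⊕ V` diagonalizes the ζ-type
difference density matrix: `Uᵀ γ^Δ_ζ U = (−λᵀλ) ⊕ (λλᵀ)`. -/
theorem zeta_NDO_from_NTO (N L : ℕ) (hN : 0 < N) (hNL : N < L)
    (T : Matrix (Fin N) (Fin (L - N)) ℝ)
    (O : Matrix (Fin N) (Fin N) ℝ)
    (V : Matrix (Fin (L - N)) (Fin (L - N)) ℝ)
    (Λ : Matrix (Fin (L - N)) (Fin N) ℝ)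
    (hO : Oᵀ * O = 1) (hV : Vᵀ * V = 1)
    (hΛ : ∀ (p : Fin (L - N)) (q : Fin N), (p : ℕ) ≠ (q : ℕ) → Λ p q = 0)
    (hSVD : Tᵀ = V * Λ * Oᵀ) :
    (fromBlocks O 0 0 V)ᵀ * fromBlocks (-(T * Tᵀ)) 0 0 (Tᵀ * T) * fromBlocks O 0 0 V =
      fromBlocks (-(Λᵀ * Λ)) 0 0 (Λ * Λᵀ) := by
  have hT : T = O * Λᵀ * Vᵀ := by
    have := congrArg Matrix.transpose hSVD
    simpa [Matrix.transpose_mul, Matrix.mul_assoc] using this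
  have hO' : O * Oᵀ = 1 := mul_eq_one_comm.mp hO
  have hV' : V * Vᵀ = 1 := mul_eq_one_comm.mp hV
  have hOc : ∀ m (X : Matrix (Fin N) (Fin m) ℝ), Oᵀ * (O * X) = X := by
    intro m X; rw [← Matrix.mul_assoc, hO, Matrix.one_mul]
  have hOc' : ∀ m (X : Matrix (Fin N) (Fin m) ℝ), O * (Oᵀ * X) = X := by
    intro m X; rw [← Matrix.mul_assoc, hO', Matrix.one_mul]
  have hVc : ∀ m (X : Matrix (Fin (L-N)) (Fin m) ℝ), Vᵀ * (V * X) = X := by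
    intro m X; rw [← Matrix.mul_assoc, hV, Matrix.one_mul]
  have hVc' : ∀ m (X : Matrix (Fin (L-N)) (Fin m) ℝ), V * (Vᵀ * X) = X := by
    intro m X; rw [← Matrix.mul_assoc, hV', Matrix.one_mul]
  subst hT
  simp only [Matrix.fromBlocks_transpose, Matrix.fromBlocks_multiply,
    Matrix.transpose_zero, Matrix.transpose_mul, Matrix.transpose_transpose,
    Matrix.mul_neg, Matrix.neg_mul, Matrix.mul_assoc, hOc, hOc', hVc, hVc',
    hO, hV, hO', hV', Matrix.mul_one, Matrix.mul_zero, Matrix.zero_mul,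
    add_zero, zero_add, neg_zero]
end

section
/- There exist real 2×2 matrices X and Y and a real number μ such that μ is an eigenvalue of XᵀX + YᵀY but μ is not an eigenvalue of XXᵀ + YYᵀ; i.e., the negative and positive semidefinite blocks of the EOM difference density matrix need not share their nonzero eigenvalues, so the native TDDFRT natural difference orbitals are not paired in general. -/
open Matrix

/-- There exist real 2×2 matrices `X`, `Y` and a real `μ` such that `μ`
is an eigenvalue of `XᵀX + YᵀY` but not of `XXᵀ + YYᵀ`: the detachment and attachment
blocks of the EOM difference density matrix need not share their nonzero eigenvalues,
so the native TDDFRT natural difference orbitals are not paired in general. -/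
theorem eom_NDOs_not_paired :
    ∃ (X Y : Matrix (Fin 2) (Fin 2) ℝ) (μ : ℝ),
      (∃ v : Fin 2 → ℝ, v ≠ 0 ∧ (Xᵀ * X + Yᵀ * Y) *ᵥ v = μ • v) ∧
      ¬ (∃ w : Fin 2 → ℝ, w ≠ 0 ∧ (X * Xᵀ + Y * Yᵀ) *ᵥ w = μ • w) := by
  refine ⟨!![1,0;0,0], !![0,1;0,0], 1, ⟨![1,0], ?_, ?_⟩, ?_⟩
  · intro h
    have := congrFun h 0
    simp at this
  · funext i
    fin_cases i <;>
      simp [Matrix.mulVec, dotProduct, Fin.sum_univ_two, Matrix.transpose,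
        Matrix.mul_apply]
  · rintro ⟨w, hw, h⟩
    apply hw
    have h0 := congrFun h 0
    have h1 := congrFun h 1
    simp [Matrix.mulVec, dotProduct, Fin.sum_univ_two, Matrix.transpose,
      Matrix.mul_apply, Matrix.vecHead, Matrix.vecTail] at h0 h1
    funext i
    fin_cases i <;> simp <;> linarith
end

section
/- Let A and B be real symmetric d×d matrices, x and y vectors in ℝ^d, and ω a real number such that Ax + By = ωx and Bx + Ay = −ωy, and suppose A − B is positive definite. Let S^{1/2} denote the positive definite square root of S = A − B, set R₊ = S^{1/2}(A + B)S^{1/2} and f₊ = (S^{1/2})⁻¹(x + y). Then R₊ f₊ = ω² f₊; i.e., the TDDFRT eigenproblem reduces to the Hermitian eigenproblem underlying Casida's auxiliary many-body wavefunction. -/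
open Matrix

/-- Given the TDDFRT response equations with `A`, `B` real symmetric
and `A − B` positive definite with positive definite square root `S₂`
(`S₂ * S₂ = A − B`), setting `R₊ = S₂(A + B)S₂` and `f₊ = S₂⁻¹(x + y)`, one has
`R₊ f₊ = ω² f₊`: Casida's Hermitian eigenproblem. -/
theorem casida_hermitian_eigenproblem (d : ℕ)
    (A B : Matrix (Fin d) (Fin d) ℝ) (x y : Fin d → ℝ) (ω : ℝ)
    (hA : A.IsHermitian) (hB : B.IsHermitian)
    (h1 : A *ᵥ x + B *ᵥ y = ω • x)
    (h2 : B *ᵥ x + A *ᵥ y = -(ω • y))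
    (hAB : (A - B).PosDef)
    (S₂ : Matrix (Fin d) (Fin d) ℝ) (hS₂ : S₂.PosDef) (hsqrt : S₂ * S₂ = A - B) :
    (S₂ * (A + B) * S₂) *ᵥ (S₂⁻¹ *ᵥ (x + y)) = (ω ^ 2) • (S₂⁻¹ *ᵥ (x + y)) := by
  have hdet : IsUnit S₂.det := hS₂.det_pos.ne'.isUnit
  have hinv : S₂ * S₂⁻¹ = 1 := mul_nonsing_inv S₂ hdet
  have hinv' : S₂⁻¹ * S₂ = 1 := nonsing_inv_mul S₂ hdet
  -- sum of equations: (A+B)(x+y) = ω(x-y)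
  have hsum : (A + B) *ᵥ (x + y) = ω • (x - y) := by
    have := congrArg₂ (· + ·) h1 h2
    simp only [Matrix.add_mulVec, Matrix.mulVec_add] at this ⊢
    simp only [smul_sub]
    linear_combination (norm := (funext i; simp; ring)) this
  -- difference: (A-B)(x-y) = ω(x+y)
  have hdiff : (A - B) *ᵥ (x - y) = ω • (x + y) := by
    have := congrArg₂ (· - ·) h1 h2
    simp only [Matrix.sub_mulVec, Matrix.mulVec_sub] at this ⊢
    simp only [smul_add]
    linear_combination (norm := (funext i; simp; ring)) this
  -- hence S₂ (x - y) = ω • S₂⁻¹ (x+y)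
  have key : S₂ *ᵥ (x - y) = ω • (S₂⁻¹ *ᵥ (x + y)) := by
    have h3 : S₂⁻¹ *ᵥ ((A - B) *ᵥ (x - y)) = S₂⁻¹ *ᵥ (ω • (x + y)) := by rw [hdiff]
    rw [mulVec_mulVec, ← hsqrt, ← Matrix.mul_assoc, hinv', Matrix.one_mul,
      Matrix.mulVec_smul] at h3
    exact h3
  calc (S₂ * (A + B) * S₂) *ᵥ (S₂⁻¹ *ᵥ (x + y))
      = (S₂ * (A + B) * (S₂ * S₂⁻¹)) *ᵥ (x + y) := by
        rw [mulVec_mulVec, Matrix.mul_assoc]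
    _ = (S₂ * (A + B)) *ᵥ (x + y) := by rw [hinv, Matrix.mul_one]
    _ = S₂ *ᵥ ((A + B) *ᵥ (x + y)) := by rw [mulVec_mulVec]
    _ = ω • (S₂ *ᵥ (x - y)) := by rw [hsum, Matrix.mulVec_smul]
    _ = (ω ^ 2) • (S₂⁻¹ *ᵥ (x + y)) := by rw [key, smul_smul, sq]
end

section
/- Let A and B be real symmetric d×d matrices, x and y vectors in ℝ^d with xᵀx − yᵀy = 1, and ω a nonzero real number such that Ax + By = ωx and Bx + Ay = −ωy, and suppose A − B is positive definite. Then f₊ = ((A−B)^{1/2})⁻¹(x + y) satisfies f₊ᵀ f₊ = ω⁻¹; consequently the normalization prefactor α of Casida's auxiliary wavefunction equals 1. -/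
open Matrix

/-!
Subtracting the two response equations gives `(A - B)(x - y) = ω (x + y)`, so
`(A - B)⁻¹ (x + y) = ω⁻¹ (x - y)`. Since the square root `S₂` is symmetric,
`f₊ᵀ f₊ = (x + y)ᵀ (S₂ S₂)⁻¹ (x + y) = ω⁻¹ (x + y)ᵀ (x - y) = ω⁻¹ (xᵀx - yᵀy) = ω⁻¹`.
-/

namespace Matrix

variable {n R : Type*} [Fintype n]

theorem add_dotProduct_sub [CommRing R] (x y : n → R) :
    (x + y) ⬝ᵥ (x - y) = x ⬝ᵥ x - y ⬝ᵥ y := by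
  rw [add_dotProduct, dotProduct_sub, dotProduct_sub, dotProduct_comm y x]
  ring

theorem sub_mulVec_sub_eq_smul_add [CommRing R] {A B : Matrix n n R} {x y : n → R} {ω : R}
    (h1 : A *ᵥ x + B *ᵥ y = ω • x) (h2 : B *ᵥ x + A *ᵥ y = -(ω • y)) :
    (A - B) *ᵥ (x - y) = ω • (x + y) := by
  have hdiff : A *ᵥ x + B *ᵥ y - (B *ᵥ x + A *ᵥ y) = ω • x + ω • y := by
    rw [h1, h2, sub_neg_eq_add]
  rw [sub_mulVec, mulVec_sub, mulVec_sub, smul_add, ← hdiff]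
  abel

variable [DecidableEq n]

theorem inv_mulVec_eq_inv_smul_of_mulVec_eq_smul [Field R] {M : Matrix n n R} {u v : n → R}
    {c : R} (hM : IsUnit M) (hc : c ≠ 0) (h : M *ᵥ u = c • v) :
    M⁻¹ *ᵥ v = c⁻¹ • u := by
  have hu := congrArg (M⁻¹ *ᵥ ·) h
  simp only [mulVec_mulVec, nonsing_inv_mul _ ((isUnit_iff_isUnit_det M).mp hM), one_mulVec,
    mulVec_smul] at hu
  rw [hu, smul_smul, inv_mul_cancel₀ hc, one_smul]

theorem IsSymm.inv_mulVec_dotProduct_self [CommRing R] {S : Matrix n n R} (hS : S.IsSymm)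
    (v : n → R) : (S⁻¹ *ᵥ v) ⬝ᵥ (S⁻¹ *ᵥ v) = v ⬝ᵥ ((S * S)⁻¹ *ᵥ v) := by
  have hvec : v ᵥ* S⁻¹ = S⁻¹ *ᵥ v := by
    simpa only [hS.inv.eq] using vecMul_transpose S⁻¹ v
  rw [Matrix.mul_inv_rev, ← mulVec_mulVec, dotProduct_mulVec v, hvec]

end Matrix

theorem casida_ansatz_normalization_general (d : ℕ)
    (A B : Matrix (Fin d) (Fin d) ℝ) (x y : Fin d → ℝ) (ω : ℝ)
    (hnorm : x ⬝ᵥ x - y ⬝ᵥ y = 1) (hω : ω ≠ 0)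
    (h1 : A *ᵥ x + B *ᵥ y = ω • x)
    (h2 : B *ᵥ x + A *ᵥ y = -(ω • y))
    (hAB : (A - B).PosDef)
    (S₂ : Matrix (Fin d) (Fin d) ℝ) (hS₂ : S₂.PosDef) (hsqrt : S₂ * S₂ = A - B) :
    (S₂⁻¹ *ᵥ (x + y)) ⬝ᵥ (S₂⁻¹ *ᵥ (x + y)) = ω⁻¹ ∧
      (ω * ((S₂⁻¹ *ᵥ (x + y)) ⬝ᵥ (S₂⁻¹ *ᵥ (x + y)))) ^ (-(1 : ℝ) / 2) = 1 := by
  have hsymm : S₂.IsSymm := isHermitian_iff_isSymm.mp hS₂.isHermitian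
  have hinv : (A - B)⁻¹ *ᵥ (x + y) = ω⁻¹ • (x - y) :=
    inv_mulVec_eq_inv_smul_of_mulVec_eq_smul hAB.isUnit hω (sub_mulVec_sub_eq_smul_add h1 h2)
  have hmain : (S₂⁻¹ *ᵥ (x + y)) ⬝ᵥ (S₂⁻¹ *ᵥ (x + y)) = ω⁻¹ := by
    rw [hsymm.inv_mulVec_dotProduct_self, hsqrt, hinv, dotProduct_smul, add_dotProduct_sub, hnorm,
      smul_eq_mul, mul_one]
  refine ⟨hmain, ?_⟩
  rw [hmain, mul_inv_cancel₀ hω, Real.one_rpow]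

/-- Given the TDDFRT response equations with normalization
`xᵀx − yᵀy = 1`, `ω ≠ 0`, `A − B` positive definite with positive definite square
root `S₂`, the vector `f₊ = S₂⁻¹(x + y)` satisfies `f₊ᵀf₊ = ω⁻¹`; consequently the
normalization prefactor `α = (ω f₊ᵀf₊)^{-1/2}` of Casida's auxiliary wavefunction
equals `1`. -/
theorem casida_ansatz_normalization (d : ℕ)
    (A B : Matrix (Fin d) (Fin d) ℝ) (x y : Fin d → ℝ) (ω : ℝ)
    (hA : A.IsHermitian) (hB : B.IsHermitian)
    (hnorm : x ⬝ᵥ x - y ⬝ᵥ y = 1) (hω : ω ≠ 0)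
    (h1 : A *ᵥ x + B *ᵥ y = ω • x)
    (h2 : B *ᵥ x + A *ᵥ y = -(ω • y))
    (hAB : (A - B).PosDef)
    (S₂ : Matrix (Fin d) (Fin d) ℝ) (hS₂ : S₂.PosDef) (hsqrt : S₂ * S₂ = A - B) :
    (S₂⁻¹ *ᵥ (x + y)) ⬝ᵥ (S₂⁻¹ *ᵥ (x + y)) = ω⁻¹ ∧
      (ω * ((S₂⁻¹ *ᵥ (x + y)) ⬝ᵥ (S₂⁻¹ *ᵥ (x + y)))) ^ (-(1 : ℝ) / 2) = 1 :=
  casida_ansatz_normalization_general d A B x y ω hnorm hω h1 h2 hAB S₂ hS₂ hsqrt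
end

section
/- Let A and B be real symmetric n×n matrices such that A + B and A − B are both positive semidefinite, with positive semidefinite square roots (A+B)^{1/2} and (A−B)^{1/2}. Set Q₊ = (A+B)^{1/2} + (A−B)^{1/2} and Q₋ = (A+B)^{1/2} − (A−B)^{1/2}, and let K be the 2n×2n block matrix (1/2)·[[Q₊, Q₋], [Q₋, Q₊]]. Then K is positive semidefinite and K·K = [[A, B], [B, A]]; i.e., K is the positive semidefinite square root Λ^{1/2} of the TDDFRT supermatrix Λ = [[A, B], [B, A]]. -/
/-!
Write `K = ½ (J₊ + J₋)` with `J₊ = [[SP, SP], [SP, SP]]` and `J₋ = [[SM, -SM], [-SM, SM]]`.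
These are the congruences `X M Xᴴ` of `SP` and `SM` by the `2n × n` matrices `[1; 1]` and `[1; -1]`,
so `K` is positive semidefinite. Squaring the blocks, `Q₊² + Q₋² = 2 (SP² + SM²) = 4A` and
`Q₊Q₋ + Q₋Q₊ = 2 (SP² - SM²) = 4B`, which gives `K² = [[A, B], [B, A]]`.
-/

open Matrix

namespace Matrix

variable {m n : Type*} [Fintype m] [Fintype n]

section PosSemidef

variable {R : Type*} [Ring R] [PartialOrder R] [StarRing R]

theorem PosSemidef.fromBlocks_conj {M : Matrix n n R} (hM : M.PosSemidef) (X Y : Matrix m n R) :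
    (fromBlocks (X * M * Xᴴ) (X * M * Yᴴ) (Y * M * Xᴴ) (Y * M * Yᴴ)).PosSemidef := by
  simpa [conjTranspose_fromRows_eq_fromCols_conjTranspose, fromRows_mul_fromCols] using
    hM.mul_mul_conjTranspose_same (fromRows X Y)

theorem PosSemidef.fromBlocks_add_sub [StarOrderedRing R] [DecidableEq n] {P Q : Matrix n n R}
    (hP : P.PosSemidef) (hQ : Q.PosSemidef) :
    (fromBlocks (P + Q) (P - Q) (P - Q) (P + Q)).PosSemidef := by
  simpa [fromBlocks_add, sub_eq_add_neg] using
    (hP.fromBlocks_conj (1 : Matrix n n R) 1).add (hQ.fromBlocks_conj (1 : Matrix n n R) (-1))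

end PosSemidef

theorem half_fromBlocks_add_sub_mul_self {K : Type*} [Field K] [NeZero (2 : K)]
    {A B P Q : Matrix n n K} (hP : P * P = A + B) (hQ : Q * Q = A - B) :
    ((1 / 2 : K) • fromBlocks (P + Q) (P - Q) (P - Q) (P + Q)) *
        ((1 / 2 : K) • fromBlocks (P + Q) (P - Q) (P - Q) (P + Q)) = fromBlocks A B B A := by
  have hdiag : (P + Q) * (P + Q) + (P - Q) * (P - Q) = (4 : K) • A :=
    calc _ = (2 : K) • (P * P + Q * Q) := by
          simp only [add_mul, mul_add, sub_mul, mul_sub, two_smul]; abel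
      _ = (4 : K) • A := by rw [hP, hQ]; module
  have hoff : (P + Q) * (P - Q) + (P - Q) * (P + Q) = (4 : K) • B :=
    calc _ = (2 : K) • (P * P - Q * Q) := by
          simp only [add_mul, mul_add, sub_mul, mul_sub, two_smul]; abel
      _ = (4 : K) • B := by rw [hP, hQ]; module
  have hquarter : 1 / 2 * (1 / 2) * 4 = (1 : K) := by field_simp; norm_num
  rw [smul_mul_smul_comm, fromBlocks_multiply, hdiag, hoff, add_comm ((P - Q) * (P - Q)), hdiag,
    add_comm ((P - Q) * (P + Q)), hoff]
  simp only [fromBlocks_smul, smul_smul, hquarter, one_smul]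

end Matrix

theorem tddfrt_supermatrix_sqrt_general (n : ℕ)
    (A B : Matrix (Fin n) (Fin n) ℝ)
    (SP SM : Matrix (Fin n) (Fin n) ℝ)
    (hSP : SP.PosSemidef) (hSM : SM.PosSemidef)
    (hSPsq : SP * SP = A + B) (hSMsq : SM * SM = A - B) :
    ((1 / 2 : ℝ) • fromBlocks (SP + SM) (SP - SM) (SP - SM) (SP + SM)).PosSemidef ∧
    ((1 / 2 : ℝ) • fromBlocks (SP + SM) (SP - SM) (SP - SM) (SP + SM)) *
        ((1 / 2 : ℝ) • fromBlocks (SP + SM) (SP - SM) (SP - SM) (SP + SM)) =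
      fromBlocks A B B A :=
  ⟨(hSP.fromBlocks_add_sub hSM).smul (by norm_num), half_fromBlocks_add_sub_mul_self hSPsq hSMsq⟩

/-- Let `A`, `B` be real symmetric with `A + B` and `A − B` positive
semidefinite, with positive semidefinite square roots `SP` and `SM`. With
`Q₊ = SP + SM`, `Q₋ = SP − SM` and `K = (1/2)·[[Q₊, Q₋], [Q₋, Q₊]]`, the matrix `K`
is positive semidefinite and `K·K = [[A, B], [B, A]]`: `K` is the positive
semidefinite square root of the TDDFRT supermatrix `Λ`. -/
theorem tddfrt_supermatrix_sqrt (n : ℕ)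
    (A B : Matrix (Fin n) (Fin n) ℝ)
    (hA : A.IsHermitian) (hB : B.IsHermitian)
    (hplus : (A + B).PosSemidef) (hminus : (A - B).PosSemidef)
    (SP SM : Matrix (Fin n) (Fin n) ℝ)
    (hSP : SP.PosSemidef) (hSM : SM.PosSemidef)
    (hSPsq : SP * SP = A + B) (hSMsq : SM * SM = A - B) :
    ((1 / 2 : ℝ) • fromBlocks (SP + SM) (SP - SM) (SP - SM) (SP + SM)).PosSemidef ∧
    ((1 / 2 : ℝ) • fromBlocks (SP + SM) (SP - SM) (SP - SM) (SP + SM)) *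
        ((1 / 2 : ℝ) • fromBlocks (SP + SM) (SP - SM) (SP - SM) (SP + SM)) =
      fromBlocks A B B A :=
  tddfrt_supermatrix_sqrt_general n A B SP SM hSP hSM hSPsq hSMsq
end
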